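/- Let a_1, a_2 be coprime positive integers and let m be a positive integer. Then g_{m+2}(a_1, a_2, m·a_1·a_2) = (m+2)·a_1·a_2 − a_1 − a_2. -/

import Mathlib

/-- The number of representations of `M` by the tuple `a` (nonnegative coefficients). -/
noncomputable def repCount {k : ℕ} (a : Fin k → ℕ) (M : ℕ) : ℕ :=
  Nat.card {x : Fin k → ℕ // ∑ i, a i * x i = M}

/-- The `j`-Frobenius number: the greatest integer with exactly `j` representations
by `a` if such an integer exists, and `0` otherwise. -/
noncomputable def gFrob {k : ℕ} (a : Fin k → ℕ) (j : ℕ) : ℕ :=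
  sSup {M : ℕ | repCount a M = j}

/-!
Write `r M` for the number of representations of `M` by `(a₁, a₂)` and `d = a₁ a₂`. Coprimality
gives `r (M + d) = r M + 1`: the representations of `M + d` are those of `M` shifted by `(a₂, 0)`,
plus the unique one with first coordinate `< a₂`. Splitting by the third coordinate, the number of
representations of `M` by `(a₁, a₂, m d)` is `r M + r (M - m d) + r (M - 2 m d) + ⋯`.
At `G = (m + 2) d - a₁ - a₂` this is `(m + 1) + 1`, because `(a₂ - 1, a₁ - 1)` is the only
representation of `2 d - a₁ - a₂`; a third term occurs only for `m = 1`, and it vanishes since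
its argument `d - a₁ - a₂` is the Frobenius number of the pair. For `M > G` the first two terms
are already at least `m + 2` and `2`.
-/

theorem repCount_pair (a1 a2 M : ℕ) :
    repCount ![a1, a2] M = Nat.card {p : ℕ × ℕ // a1 * p.1 + a2 * p.2 = M} :=
  Nat.card_congr <| (finTwoArrowEquiv ℕ).subtypeEquiv fun x => by simp [Fin.sum_univ_two]

theorem repCount_triple (a1 a2 c M : ℕ) :
    repCount ![a1, a2, c] M =
      Nat.card {t : ℕ × ℕ × ℕ // a1 * t.1 + a2 * t.2.1 + c * t.2.2 = M} :=
  Nat.card_congr <| ((Fin.consEquiv fun _ => ℕ).symm.trans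
      ((Equiv.refl ℕ).prodCongr (finTwoArrowEquiv ℕ))).subtypeEquiv fun x => by
    simp [Fin.sum_univ_three, Fin.consEquiv, Fin.tail, add_assoc]

theorem finite_pair_reps {a1 a2 : ℕ} (ha1 : 0 < a1) (ha2 : 0 < a2) (M : ℕ) :
    Finite {p : ℕ × ℕ // a1 * p.1 + a2 * p.2 = M} :=
  Set.Finite.to_subtype <| (Set.finite_Iic (M, M)).subset fun p (hp : _ = M) =>
    ⟨by simp; nlinarith, by simp; nlinarith⟩

theorem finite_triple_reps {a1 a2 c : ℕ} (ha1 : 0 < a1) (ha2 : 0 < a2) (hc : 0 < c) (M : ℕ) :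
    Finite {t : ℕ × ℕ × ℕ // a1 * t.1 + a2 * t.2.1 + c * t.2.2 = M} :=
  Set.Finite.to_subtype <| (Set.finite_Iic (M, M, M)).subset fun t (ht : _ = M) =>
    ⟨by simp; nlinarith, by simp; nlinarith, by simp; nlinarith⟩

theorem exists_lt_mul_add_mul_eq {a1 a2 N : ℕ} (ha2 : 0 < a2) (hcop : a1.Coprime a2)
    (hN : a1 * a2 < N + a1 + a2) : ∃ x y, x < a2 ∧ a1 * x + a2 * y = N := by
  have : NeZero a2 := ⟨ha2.ne'⟩
  set x := ((a1 : ZMod a2)⁻¹ * N).val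
  have hx : x < a2 := ZMod.val_lt _
  have hmod : a1 * x ≡ N [MOD a2] := by
    rw [← ZMod.natCast_eq_natCast_iff]
    push_cast
    rw [ZMod.natCast_val, ZMod.cast_id, ← mul_assoc, ZMod.coe_mul_inv_eq_one a1 hcop, one_mul]
  obtain ⟨t, ht⟩ := Nat.modEq_iff_dvd.1 hmod
  have hax : a1 * x + a1 ≤ a1 * a2 := by nlinarith
  push_cast at ht hax hN
  have ht0 : 0 ≤ t := by
    by_contra! h
    have : (a2 : ℤ) * t ≤ -a2 := by nlinarith
    nlinarith
  lift t to ℕ using ht0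
  exact ⟨x, t, hx, by zify; linarith⟩

theorem eq_of_mul_add_mul_eq_of_lt {a1 a2 x y x' y' : ℕ} (hcop : a1.Coprime a2)
    (h : a1 * x + a2 * y = a1 * x' + a2 * y') (hx : x < a2) (hx' : x' < a2) :
    x = x' ∧ y = y' := by
  have hmod : a1 * x ≡ a1 * x' [MOD a2] := by
    simpa [Nat.ModEq, Nat.add_mul_mod_self_left] using congrArg (· % a2) h
  obtain rfl := (Nat.ModEq.cancel_left_of_coprime hcop.symm hmod).eq_of_lt_of_lt hx hx'
  exact ⟨rfl, Nat.eq_of_mul_eq_mul_left (by omega) (Nat.add_left_cancel h)⟩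

theorem exists_eq_mul_of_mul_succ_add_mul_succ {a1 a2 u v k : ℕ} (hcop : a1.Coprime a2)
    (ha1 : 0 < a1) (ha2 : 0 < a2) (h : a1 * (u + 1) + a2 * (v + 1) = k * (a1 * a2)) :
    ∃ i j, 0 < i ∧ 0 < j ∧ u + 1 = a2 * i ∧ v + 1 = a1 * j ∧ i + j = k := by
  have hu : a2 ∣ u + 1 := by
    have : a2 ∣ a1 * (u + 1) + a2 * (v + 1) := h ▸ Dvd.intro (k * a1) (by ring)
    exact hcop.symm.dvd_of_dvd_mul_left <| (Nat.dvd_add_left (dvd_mul_right a2 _)).1 this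
  have hv : a1 ∣ v + 1 := by
    have : a1 ∣ a1 * (u + 1) + a2 * (v + 1) := h ▸ Dvd.intro (k * a2) (by ring)
    exact hcop.dvd_of_dvd_mul_left <| (Nat.dvd_add_right (dvd_mul_right a1 _)).1 this
  obtain ⟨i, hi⟩ := hu
  obtain ⟨j, hj⟩ := hv
  refine ⟨i, j, Nat.pos_of_ne_zero ?_, Nat.pos_of_ne_zero ?_, hi, hj, ?_⟩
  · rintro rfl
    simp at hi
  · rintro rfl
    simp at hj
  · refine Nat.eq_of_mul_eq_mul_left (Nat.mul_pos ha1 ha2) ?_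
    rw [hi, hj] at h
    linarith

theorem repCount_pair_add_mul_self {a1 a2 : ℕ} (ha1 : 0 < a1) (ha2 : 0 < a2)
    (hcop : a1.Coprime a2) (M : ℕ) :
    repCount ![a1, a2] (M + a1 * a2) = repCount ![a1, a2] M + 1 := by
  obtain ⟨x₀, y₀, hx₀, hxy₀⟩ := exists_lt_mul_add_mul_eq (N := M + a1 * a2) ha2 hcop (by omega)
  have := finite_pair_reps ha1 ha2 M
  let f : {p : ℕ × ℕ // a1 * p.1 + a2 * p.2 = M} ⊕ Unit →
      {p : ℕ × ℕ // a1 * p.1 + a2 * p.2 = M + a1 * a2} :=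
    Sum.elim (fun p => ⟨(p.1.1 + a2, p.1.2), by linarith [p.2]⟩) fun _ => ⟨(x₀, y₀), hxy₀⟩
  rw [repCount_pair, repCount_pair, ← Nat.card_eq_of_bijective f ⟨?_, ?_⟩, Nat.card_sum,
    Nat.card_unique (α := Unit)]
  · rintro (⟨⟨x, y⟩, h⟩ | ⟨⟩) (⟨⟨x', y'⟩, h'⟩ | ⟨⟩) e <;> simp [f] at e ⊢ <;> omega
  · rintro ⟨⟨x, y⟩, h⟩
    by_cases hx : a2 ≤ x
    · refine ⟨.inl ⟨(x - a2, y), ?_⟩, ?_⟩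
      · have : a1 * x = a1 * (x - a2) + a1 * a2 := by rw [← Nat.mul_add, Nat.sub_add_cancel hx]
        dsimp only at h ⊢
        omega
      · simp [f, Nat.sub_add_cancel hx]
    · obtain ⟨rfl, rfl⟩ := eq_of_mul_add_mul_eq_of_lt hcop (hxy₀.trans h.symm) hx₀ (not_le.1 hx)
      exact ⟨.inr (), rfl⟩

theorem repCount_pair_add_mul {a1 a2 : ℕ} (ha1 : 0 < a1) (ha2 : 0 < a2)
    (hcop : a1.Coprime a2) (M k : ℕ) :
    repCount ![a1, a2] (M + k * (a1 * a2)) = repCount ![a1, a2] M + k := by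
  induction k with
  | zero => simp
  | succ k ih =>
    rw [add_one_mul, ← add_assoc, repCount_pair_add_mul_self ha1 ha2 hcop, ih, add_assoc]

theorem repCount_pair_pos {a1 a2 M : ℕ} (ha1 : 0 < a1) (ha2 : 0 < a2) (hcop : a1.Coprime a2)
    (hM : a1 * a2 < M + a1 + a2) : 0 < repCount ![a1, a2] M := by
  obtain ⟨x, y, -, h⟩ := exists_lt_mul_add_mul_eq ha2 hcop hM
  have := finite_pair_reps ha1 ha2 M
  have : Nonempty {p : ℕ × ℕ // a1 * p.1 + a2 * p.2 = M} := ⟨⟨(x, y), h⟩⟩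
  rw [repCount_pair]
  exact Nat.card_pos

theorem repCount_pair_eq_zero {a1 a2 M : ℕ} (ha1 : 0 < a1) (ha2 : 0 < a2)
    (hcop : a1.Coprime a2) (hM : M + a1 + a2 = a1 * a2) : repCount ![a1, a2] M = 0 := by
  rw [repCount_pair, Nat.card_eq_zero]
  refine .inl ⟨fun ⟨⟨u, v⟩, h⟩ => ?_⟩
  obtain ⟨i, j, hi, hj, -, -, hij⟩ :=
    exists_eq_mul_of_mul_succ_add_mul_succ (u := u) (v := v) (k := 1) hcop ha1 ha2
      (by dsimp only at h; linarith)
  omega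

theorem repCount_pair_eq_one {a1 a2 M : ℕ} (ha1 : 0 < a1) (ha2 : 0 < a2)
    (hcop : a1.Coprime a2) (hM : M + a1 + a2 = 2 * (a1 * a2)) : repCount ![a1, a2] M = 1 := by
  rw [repCount_pair, Nat.card_eq_one_iff_exists]
  refine ⟨⟨(a2 - 1, a1 - 1), ?_⟩, fun ⟨⟨u, v⟩, h⟩ => ?_⟩
  · obtain ⟨a1, rfl⟩ := Nat.exists_eq_add_one_of_ne_zero ha1.ne'
    obtain ⟨a2, rfl⟩ := Nat.exists_eq_add_one_of_ne_zero ha2.ne'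
    simp only [Nat.add_sub_cancel]
    linarith
  · obtain ⟨i, j, hi, hj, hu, hv, hij⟩ :=
      exists_eq_mul_of_mul_succ_add_mul_succ (u := u) (v := v) (k := 2) hcop ha1 ha2
        (by dsimp only at h; linarith)
    obtain ⟨rfl, rfl⟩ : i = 1 ∧ j = 1 := by omega
    ext <;> dsimp only <;> omega

theorem repCount_triple_add {a1 a2 c : ℕ} (ha1 : 0 < a1) (ha2 : 0 < a2) (hc : 0 < c) (M : ℕ) :
    repCount ![a1, a2, c] (M + c) = repCount ![a1, a2] (M + c) + repCount ![a1, a2, c] M := by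
  have := finite_pair_reps ha1 ha2 (M + c)
  have := finite_triple_reps ha1 ha2 hc M
  let f : {p : ℕ × ℕ // a1 * p.1 + a2 * p.2 = M + c} ⊕
      {t : ℕ × ℕ × ℕ // a1 * t.1 + a2 * t.2.1 + c * t.2.2 = M} →
      {t : ℕ × ℕ × ℕ // a1 * t.1 + a2 * t.2.1 + c * t.2.2 = M + c} :=
    Sum.elim (fun p => ⟨(p.1.1, p.1.2, 0), by linarith [p.2]⟩)
      fun t => ⟨(t.1.1, t.1.2.1, t.1.2.2 + 1), by linarith [t.2]⟩
  rw [repCount_triple, repCount_triple, repCount_pair, ← Nat.card_eq_of_bijective f ⟨?_, ?_⟩,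
    Nat.card_sum]
  · rintro (⟨⟨x, y⟩, h⟩ | ⟨⟨x, y, z⟩, h⟩) (⟨⟨x', y'⟩, h'⟩ | ⟨⟨x', y', z'⟩, h'⟩) e <;>
      simp [f] at e ⊢ <;> omega
  · rintro ⟨⟨x, y, _ | z⟩, h⟩
    · exact ⟨.inl ⟨(x, y), by simpa using h⟩, rfl⟩
    · exact ⟨.inr ⟨(x, y, z), by dsimp only at h ⊢; linarith⟩, rfl⟩

theorem repCount_triple_of_lt {a1 a2 c M : ℕ} (hM : M < c) :
    repCount ![a1, a2, c] M = repCount ![a1, a2] M := by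
  rw [repCount_triple, repCount_pair]
  refine (Nat.card_eq_of_bijective (fun p => ⟨(p.1.1, p.1.2, 0), by simpa using p.2⟩)
    ⟨fun p q e => ?_, ?_⟩).symm
  · ext <;> simp_all
  · rintro ⟨⟨x, y, _ | z⟩, h⟩
    · exact ⟨⟨(x, y), by simpa using h⟩, rfl⟩
    · dsimp only at h
      nlinarith

theorem repCount_pair_le_triple {a1 a2 c : ℕ} (ha1 : 0 < a1) (ha2 : 0 < a2) (hc : 0 < c)
    (M : ℕ) : repCount ![a1, a2] M ≤ repCount ![a1, a2, c] M := by
  rcases lt_or_ge M c with h | h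
  · exact (repCount_triple_of_lt h).ge
  · obtain ⟨M, rfl⟩ := Nat.exists_eq_add_of_le' h
    rw [repCount_triple_add ha1 ha2 hc]
    exact Nat.le_add_right _ _

theorem repCount_triple_eq_one {a1 a2 m M : ℕ} (ha1 : 0 < a1) (ha2 : 0 < a2)
    (hcop : a1.Coprime a2) (hm : 0 < m) (hM : M + a1 + a2 = 2 * (a1 * a2)) :
    repCount ![a1, a2, m * (a1 * a2)] M = 1 := by
  rcases lt_or_ge M (m * (a1 * a2)) with hlt | hge
  · rw [repCount_triple_of_lt hlt, repCount_pair_eq_one ha1 ha2 hcop hM]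
  · obtain rfl : m = 1 := by
      have : m < 2 := by nlinarith
      omega
    obtain ⟨s, rfl⟩ := Nat.exists_eq_add_of_le' hge
    rw [one_mul] at hge hM ⊢
    rw [repCount_triple_add ha1 ha2 (Nat.mul_pos ha1 ha2), repCount_triple_of_lt (by omega),
      repCount_pair_eq_one ha1 ha2 hcop hM, repCount_pair_eq_zero ha1 ha2 hcop (by omega)]

theorem repCount_triple_eq {a1 a2 m M : ℕ} (ha1 : 0 < a1) (ha2 : 0 < a2)
    (hcop : a1.Coprime a2) (hm : 0 < m) (hM : M + a1 + a2 = (m + 2) * (a1 * a2)) :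
    repCount ![a1, a2, m * (a1 * a2)] M = m + 2 := by
  have : a1 ≤ a1 * a2 := Nat.le_mul_of_pos_right a1 ha2
  have : a2 ≤ a1 * a2 := Nat.le_mul_of_pos_left a2 ha1
  obtain ⟨b, rfl⟩ := Nat.exists_eq_add_of_le' (show m * (a1 * a2) ≤ M by linarith)
  have hb : b + a1 + a2 = 2 * (a1 * a2) := by linarith
  rw [repCount_triple_add ha1 ha2 (by positivity), repCount_pair_add_mul ha1 ha2 hcop,
    repCount_pair_eq_one ha1 ha2 hcop hb, repCount_triple_eq_one ha1 ha2 hcop hm hb]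
  ring

theorem lt_repCount_triple {a1 a2 m M : ℕ} (ha1 : 0 < a1) (ha2 : 0 < a2)
    (hcop : a1.Coprime a2) (hm : 0 < m) (hM : (m + 2) * (a1 * a2) < M + a1 + a2) :
    m + 2 < repCount ![a1, a2, m * (a1 * a2)] M := by
  have : a1 + a2 ≤ a1 * a2 + 1 := by nlinarith
  obtain ⟨u, rfl⟩ := Nat.exists_eq_add_of_le' (show m * (a1 * a2) ≤ M by linarith)
  have hu : 2 ≤ repCount ![a1, a2] u := by
    obtain ⟨s, rfl⟩ := Nat.exists_eq_add_of_le' (show 1 * (a1 * a2) ≤ u by linarith)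
    have := repCount_pair_pos ha1 ha2 hcop (M := s) (by nlinarith)
    rw [repCount_pair_add_mul ha1 ha2 hcop]
    omega
  have hc : 0 < m * (a1 * a2) := by positivity
  have := repCount_pair_le_triple ha1 ha2 hc u
  rw [repCount_triple_add ha1 ha2 hc, repCount_pair_add_mul ha1 ha2 hcop]
  omega

/-- Third part of the Corollary: `g_{m+2}(a₁, a₂, m·a₁·a₂) = (m+2)·a₁·a₂ − a₁ − a₂`. -/
theorem gFrob_succ_succ_of_triple (a1 a2 : ℕ) (ha1 : 0 < a1) (ha2 : 0 < a2)
    (hcop : Nat.Coprime a1 a2) (m : ℕ) (hm : 0 < m) :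
    (gFrob ![a1, a2, m * a1 * a2] (m + 2) : ℤ) = (m + 2) * a1 * a2 - a1 - a2 := by
  have hle : a1 + a2 ≤ (m + 2) * (a1 * a2) := by
    nlinarith [Nat.le_mul_of_pos_right a1 ha2, Nat.le_mul_of_pos_left a2 ha1]
  obtain ⟨G, hG⟩ := Nat.exists_eq_add_of_le' hle
  rw [← add_assoc, eq_comm] at hG
  have hGreatest : IsGreatest {M | repCount ![a1, a2, m * a1 * a2] M = m + 2} G := by
    rw [Nat.mul_assoc]
    exact ⟨repCount_triple_eq ha1 ha2 hcop hm hG, fun M hM =>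
      not_lt.1 fun h => (lt_repCount_triple ha1 ha2 hcop hm (by omega)).ne' hM⟩
  have hGz : (G + a1 + a2 : ℤ) = (m + 2) * (a1 * a2) := by exact_mod_cast hG
  rw [gFrob, hGreatest.csSup_eq]
  linear_combination hGz
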